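/- arXiv:1305.3473 — 3 statements merged into one kernel-verified Lean document; each statement's English description precedes it below -/
import Mathlib

section
/- Let f be a homeomorphism of a compact metric space X with the shadowing property, and suppose f is topologically transitive. If p and q are fixed points of f, then for every ε > 0 there exist a point y ∈ X and an integer ℓ ≥ 0 such that d(f^i(y), p) < ε for all i ≤ 0 and d(f^i(y), q) < ε for all i ≥ ℓ. -/
open Filter Topology

/-- A transitive homeomorphism of a compact metric space with the shadowing property
connects fixed points: any pseudo-orbit from `p` to `q` is shadowed. -/
theorem shadowing_connects_fixed_points
    {X : Type*} [MetricSpace X] [CompactSpace X]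
    (f : Equiv.Perm X) (hf : Continuous f) (hf' : Continuous f.symm)
    (hshadow : ∀ ε > (0 : ℝ), ∃ δ > (0 : ℝ), ∀ x : ℤ → X,
      (∀ i : ℤ, dist (f (x i)) (x (i + 1)) < δ) →
      ∃ y : X, ∀ i : ℤ, dist ((f ^ i) y) (x i) < ε)
    (htrans : ∃ x : X, Dense (Set.range fun n : ℕ => (⇑f)^[n] x))
    (p q : X) (hp : f p = p) (hq : f q = q) :
    ∀ ε > (0 : ℝ), ∃ (y : X) (ℓ : ℤ), 0 ≤ ℓ ∧
      (∀ i : ℤ, i ≤ 0 → dist ((f ^ i) y) p < ε) ∧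
      (∀ i : ℤ, ℓ ≤ i → dist ((f ^ i) y) q < ε) := by
  intro ε hε
  obtain ⟨δ, hδ, hsh⟩ := hshadow ε hε
  obtain ⟨x0, hx0⟩ := htrans
  -- every iterate of x0 has dense forward orbit
  have key : ∀ k : ℕ, Dense (Set.range fun n : ℕ => (⇑f)^[n] ((⇑f)^[k] x0)) := by
    intro k
    induction k with
    | zero => simpa using hx0
    | succ k ih =>
      have himg : (Set.range fun n : ℕ => (⇑f)^[n] ((⇑f)^[k+1] x0))
          = ⇑f '' (Set.range fun n : ℕ => (⇑f)^[n] ((⇑f)^[k] x0)) := by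
        ext zz
        simp only [Set.mem_range, Set.mem_image]
        constructor
        · rintro ⟨n, rfl⟩
          refine ⟨(⇑f)^[n] ((⇑f)^[k] x0), ⟨n, rfl⟩, ?_⟩
          have e1 : (⇑f)^[n] ((⇑f)^[k+1] x0) = (⇑f)^[n + (k+1)] x0 :=
            (Function.iterate_add_apply _ n (k+1) x0).symm
          have e2 : f ((⇑f)^[n] ((⇑f)^[k] x0)) = (⇑f)^[(n + k) + 1] x0 := by
            rw [← Function.iterate_add_apply]
            exact (Function.iterate_succ_apply' (⇑f) (n + k) x0).symm
          rw [e1, e2, show n + (k+1) = (n + k) + 1 by omega]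
        · rintro ⟨w, ⟨n, rfl⟩, rfl⟩
          refine ⟨n, ?_⟩
          have e1 : (⇑f)^[n] ((⇑f)^[k+1] x0) = (⇑f)^[n + (k+1)] x0 :=
            (Function.iterate_add_apply _ n (k+1) x0).symm
          have e2 : f ((⇑f)^[n] ((⇑f)^[k] x0)) = (⇑f)^[(n + k) + 1] x0 := by
            rw [← Function.iterate_add_apply]
            exact (Function.iterate_succ_apply' (⇑f) (n + k) x0).symm
          rw [e1, e2, show n + (k+1) = (n + k) + 1 by omega]
      rw [dense_iff_closure_eq] at ih ⊢
      rw [himg]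
      apply Set.eq_univ_of_univ_subset
      have hsub := image_closure_subset_closure_image (s := Set.range fun n : ℕ => (⇑f)^[n] ((⇑f)^[k] x0)) hf
      rw [ih, Set.image_univ, Equiv.range_eq_univ] at hsub
      exact hsub
  -- find z close to p whose m-th iterate is close to q, with m ≥ 1
  obtain ⟨_, ⟨n, rfl⟩, hn⟩ := Metric.mem_closure_iff.mp (hx0 p) δ hδ
  obtain ⟨_, ⟨m', rfl⟩, hm⟩ := Metric.mem_closure_iff.mp (key (n+1) q) δ hδ
  set z : X := (⇑f)^[n] x0 with hz
  set m : ℕ := m' + 1 with hmdef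
  have hzp : dist z p < δ := by rw [hz, dist_comm]; exact hn
  have hzq : dist ((⇑f)^[m] z) q < δ := by
    have e : (⇑f)^[m'] ((⇑f)^[n+1] x0) = (⇑f)^[m] z := by
      rw [hz, hmdef, ← Function.iterate_add_apply, ← Function.iterate_add_apply,
        show m' + (n + 1) = m' + 1 + n by omega]
    rw [← e, dist_comm]
    exact hm
  have h1m : (1:ℤ) ≤ (m:ℤ) := by
    have : 1 ≤ m := by omega
    exact_mod_cast this
  -- the pseudo-orbit
  set xs : ℤ → X := fun i =>
    if i ≤ 0 then p else if i ≤ (m : ℤ) then (⇑f)^[(i-1).toNat] z else q with hxs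
  have hxs0 : ∀ i : ℤ, i ≤ 0 → xs i = p := by
    intro i hi; simp only [hxs]; rw [if_pos hi]
  have hxsm : ∀ i : ℤ, 1 ≤ i → i ≤ (m:ℤ) → xs i = (⇑f)^[(i-1).toNat] z := by
    intro i hi1 hi2; simp only [hxs]; rw [if_neg (by omega), if_pos hi2]
  have hxsq : ∀ i : ℤ, (m:ℤ) < i → xs i = q := by
    intro i hi; simp only [hxs]; rw [if_neg (by omega), if_neg (by omega)]
  have hpseudo : ∀ i : ℤ, dist (f (xs i)) (xs (i + 1)) < δ := by
    intro i
    rcases le_or_gt (i + 1) 0 with h1 | h1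
    · rw [hxs0 i (by omega), hxs0 (i+1) h1, hp, dist_self]
      exact hδ
    rcases eq_or_lt_of_le (by omega : (1:ℤ) ≤ i + 1) with h2 | h2
    · -- i = 0
      have hi : i = 0 := by omega
      subst hi
      rw [hxs0 0 le_rfl, hxsm (0+1) (by omega) (by omega), hp]
      have : ((0:ℤ)+1-1).toNat = 0 := by omega
      rw [this, Function.iterate_zero_apply, dist_comm]
      exact hzp
    rcases le_or_gt (i + 1) (m : ℤ) with h3 | h3
    · -- 1 ≤ i, i+1 ≤ m
      rw [hxsm i (by omega) (by omega), hxsm (i+1) (by omega) h3]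
      have hnat : (i + 1 - 1).toNat = (i - 1).toNat + 1 := by omega
      rw [hnat, Function.iterate_succ_apply', dist_self]
      exact hδ
    rcases eq_or_lt_of_le (by omega : (m:ℤ) ≤ i) with h4 | h4
    · -- i = m
      rw [hxsm i (by omega) (by omega), hxsq (i+1) (by omega),
        ← Function.iterate_succ_apply' (⇑f) ((i-1).toNat) z,
        show (i-1).toNat.succ = m by omega]
      exact hzq
    · -- i > m
      rw [hxsq i h4, hxsq (i+1) (by omega), hq, dist_self]
      exact hδ
  obtain ⟨y, hy⟩ := hsh xs hpseudo
  refine ⟨y, (m : ℤ) + 1, by positivity, ?_, ?_⟩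
  · intro i hi
    have := hy i
    rwa [hxs0 i hi] at this
  · intro i hi
    have := hy i
    rwa [hxsq i (by omega)] at this
end

section
/- Let f be a homeomorphism of a compact metric space X with the weak specification property, and let p, q be fixed points of f lying in the interiors of their stable and unstable sets in the following sense: p is an attracting-type fixed point for the backward dynamics on its local unstable set and q is attracting on its local stable set. More precisely: suppose there is ε₀ > 0 such that every point z with d(f^{-n}(z), p) ≤ ε₀ for all n ≥ 0 lies in the unstable set W^u(p) = {z : f^{-n}(z) → p}, and every point z with d(f^n(z), q) ≤ ε₀ for all n ≥ 0 lies in the stable set W^s(q) = {z : f^n(z) → q}. Then W^u(p) ∩ W^s(q) ≠ ∅. -/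
open Filter Topology

lemma perm_zpow_continuous {X : Type*} [TopologicalSpace X]
    (f : Equiv.Perm X) (hf : Continuous f) (hf' : Continuous f.symm) :
    ∀ j : ℤ, Continuous fun x => (f ^ j) x := by
  intro j
  induction j using Int.induction_on with
  | zero => simpa using continuous_id'
  | succ n ih =>
      have : (fun x => (f ^ ((n : ℤ) + 1)) x) = (fun x => (f ^ (n : ℤ)) x) ∘ f := by
        funext x
        simp [zpow_add, Equiv.Perm.mul_apply]
      rw [this]; exact ih.comp hf
  | pred n ih =>
      have : (fun x => (f ^ (-(n : ℤ) - 1)) x) = (fun x => (f ^ (-(n : ℤ))) x) ∘ f.symm := by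
        funext x
        have : (f ^ (-(n : ℤ) - 1)) = (f ^ (-(n : ℤ))) * f⁻¹ := by
          rw [sub_eq_add_neg, zpow_add, zpow_neg_one]
        simp [this, Equiv.Perm.mul_apply, Equiv.Perm.inv_def]
      rw [this]; exact ih.comp hf'

/-- Weak specification connects stable and unstable sets of fixed points. -/
theorem weakSpecification_unstable_inter_stable
    {X : Type*} [MetricSpace X] [CompactSpace X]
    (f : Equiv.Perm X) (hf : Continuous f) (hf' : Continuous f.symm)
    (hspec : ∀ ε > (0 : ℝ), ∃ N : ℕ, ∀ (x₁ x₂ : X) (a₁ b₁ a₂ b₂ : ℤ),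
      a₁ ≤ b₁ → b₁ < a₂ → a₂ ≤ b₂ → (N : ℤ) ≤ a₂ - b₁ →
      ∃ y : X,
        (∀ j : ℤ, a₁ ≤ j → j ≤ b₁ → dist ((f ^ j) y) ((f ^ j) x₁) ≤ ε) ∧
        (∀ j : ℤ, a₂ ≤ j → j ≤ b₂ → dist ((f ^ j) y) ((f ^ j) x₂) ≤ ε))
    (p q : X) (hp : f p = p) (hq : f q = q)
    (ε₀ : ℝ) (hε₀ : 0 < ε₀)
    (hloc_u : ∀ z : X, (∀ n : ℕ, dist ((f ^ (-(n : ℤ))) z) p ≤ ε₀) →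
      Tendsto (fun n : ℕ => (f ^ (-(n : ℤ))) z) atTop (𝓝 p))
    (hloc_s : ∀ z : X, (∀ n : ℕ, dist ((f ^ (n : ℤ)) z) q ≤ ε₀) →
      Tendsto (fun n : ℕ => (f ^ (n : ℤ)) z) atTop (𝓝 q)) :
    ∃ z : X,
      Tendsto (fun n : ℕ => (f ^ (-(n : ℤ))) z) atTop (𝓝 p) ∧
      Tendsto (fun n : ℕ => (f ^ (n : ℤ)) z) atTop (𝓝 q) := by
  have hpj : ∀ j : ℤ, (f ^ j) p = p := fun j => (Function.IsFixedPt.perm_zpow hp j)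
  have hqj : ∀ j : ℤ, (f ^ j) q = q := fun j => (Function.IsFixedPt.perm_zpow hq j)
  have hcont := perm_zpow_continuous f hf hf'
  obtain ⟨N, hN⟩ := hspec ε₀ hε₀
  -- construct shadowing points
  have hy : ∀ M : ℕ, ∃ y : X,
      (∀ j : ℤ, -(M : ℤ) ≤ j → j ≤ 0 → dist ((f ^ j) y) p ≤ ε₀) ∧
      (∀ j : ℤ, (N : ℤ) + 1 ≤ j → j ≤ (N : ℤ) + 1 + M → dist ((f ^ j) y) q ≤ ε₀) := by
    intro M
    obtain ⟨y, h1, h2⟩ := hN p q (-(M : ℤ)) 0 ((N : ℤ) + 1) ((N : ℤ) + 1 + M)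
      (by omega) (by omega) (by omega) (by omega)
    exact ⟨y, fun j hj hj' => by simpa [hpj] using h1 j hj hj',
      fun j hj hj' => by simpa [hqj] using h2 j hj hj'⟩
  choose y hy1 hy2 using hy
  obtain ⟨z, -, φ, hφ, hyz⟩ := isCompact_univ.tendsto_subseq (x := y) (fun n => Set.mem_univ (y n))
  have hz1 : ∀ j : ℤ, j ≤ 0 → dist ((f ^ j) z) p ≤ ε₀ := by
    intro j hj
    have : Tendsto (fun m => dist ((f ^ j) (y (φ m))) p) atTop (𝓝 (dist ((f ^ j) z) p)) :=
      (continuous_dist.comp ((hcont j).prodMk continuous_const)).continuousAt.tendsto.comp hyz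
    refine le_of_tendsto this ?_
    filter_upwards [hφ.tendsto_atTop.eventually_ge_atTop j.natAbs] with m hm
    exact hy1 (φ m) j (by omega) hj
  have hz2 : ∀ j : ℤ, (N : ℤ) + 1 ≤ j → dist ((f ^ j) z) q ≤ ε₀ := by
    intro j hj
    have : Tendsto (fun m => dist ((f ^ j) (y (φ m))) q) atTop (𝓝 (dist ((f ^ j) z) q)) :=
      (continuous_dist.comp ((hcont j).prodMk continuous_const)).continuousAt.tendsto.comp hyz
    refine le_of_tendsto this ?_
    filter_upwards [hφ.tendsto_atTop.eventually_ge_atTop j.natAbs] with m hm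
    exact hy2 (φ m) j hj (by omega)
  refine ⟨z, hloc_u z (fun n => hz1 _ (by simp)), ?_⟩
  -- stable side: shift by N+1
  set w := (f ^ ((N : ℤ) + 1)) z with hw
  have key : ∀ n : ℕ, (f ^ (n : ℤ)) w = (f ^ ((n : ℤ) + ((N : ℤ) + 1))) z := by
    intro n
    rw [hw, ← Equiv.Perm.mul_apply, ← zpow_add]
  have hws : Tendsto (fun n : ℕ => (f ^ (n : ℤ)) w) atTop (𝓝 q) :=
    hloc_s w (fun n => by rw [key]; exact hz2 _ (by omega))
  have hws' : Tendsto (fun n : ℕ => (f ^ ((n + (N + 1) : ℕ) : ℤ)) z) atTop (𝓝 q) := by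
    refine hws.congr fun n => ?_
    rw [key]; push_cast; ring_nf
  exact (tendsto_add_atTop_iff_nat (N + 1)).mp hws'
end

section
/- Let f be a homeomorphism of a compact metric space X with the shadowing property and let p, q be fixed points of f satisfying the local stable/unstable attraction hypothesis: there is ε₀ > 0 such that any point z with d(f^n(z), p) ≤ ε₀ for all n ≤ 0 lies in W^u(p), and any z with d(f^n(z), q) ≤ ε₀ for all n ≥ 0 lies in W^s(q). If f is topologically transitive, then W^u(p) ∩ W^s(q) ≠ ∅. -/
open Filter Topology

/-- For a transitive homeomorphism with the shadowing property and fixed points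
`p`, `q` satisfying the local stable/unstable attraction hypothesis, the unstable
set of `p` meets the stable set of `q`. -/
theorem shadowing_transitive_unstable_inter_stable
    {X : Type*} [MetricSpace X] [CompactSpace X]
    (f : Equiv.Perm X) (hf : Continuous f) (hf' : Continuous f.symm)
    (hshadow : ∀ ε > (0 : ℝ), ∃ δ > (0 : ℝ), ∀ x : ℤ → X,
      (∀ i : ℤ, dist (f (x i)) (x (i + 1)) < δ) →
      ∃ y : X, ∀ i : ℤ, dist ((f ^ i) y) (x i) < ε)
    (htrans : ∃ x : X, Dense (Set.range fun n : ℕ => (⇑f)^[n] x))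
    (p q : X) (hp : f p = p) (hq : f q = q)
    (ε₀ : ℝ) (hε₀ : 0 < ε₀)
    (hloc_u : ∀ z : X, (∀ n : ℕ, dist ((f ^ (-(n : ℤ))) z) p ≤ ε₀) →
      Tendsto (fun n : ℕ => (f ^ (-(n : ℤ))) z) atTop (𝓝 p))
    (hloc_s : ∀ z : X, (∀ n : ℕ, dist ((f ^ (n : ℤ)) z) q ≤ ε₀) →
      Tendsto (fun n : ℕ => (f ^ (n : ℤ)) z) atTop (𝓝 q)) :
    ∃ z : X,
      Tendsto (fun n : ℕ => (f ^ (-(n : ℤ))) z) atTop (𝓝 p) ∧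
      Tendsto (fun n : ℕ => (f ^ (n : ℤ)) z) atTop (𝓝 q) := by
  classical
  have hqn : ∀ n : ℕ, (⇑f)^[n] q = q := fun n => (Function.IsFixedPt.iterate hq n)
  obtain ⟨δ, hδ, hshad⟩ := hshadow ε₀ hε₀
  have huc : UniformContinuous f := CompactSpace.uniformContinuous_of_continuous hf
  obtain ⟨η, hη, hηf⟩ := Metric.uniformContinuous_iff.mp huc (δ / 2) (by linarith)
  obtain ⟨x, hx⟩ := htrans
  -- find a time `m'` where the orbit is η-close to p
  obtain ⟨m', hm'⟩ : ∃ m', dist ((⇑f)^[m'] x) p < η := by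
    obtain ⟨y, hy1, n, rfl⟩ := Metric.dense_iff.mp hx p η hη
    exact ⟨n, Metric.mem_ball.mp hy1⟩
  -- find a later time `m` where the orbit is δ/2-close to q
  have key : ∃ m, m' < m ∧ dist ((⇑f)^[m] x) q < δ / 2 := by
    by_contra h
    push_neg at h
    set F : Set X := (fun k => (⇑f)^[k] x) '' Set.Iic m' with hF
    have hFfin : F.Finite := (Set.finite_Iic m').image _
    have hsub : Metric.ball q (δ / 2) ⊆ F := by
      intro y hy
      have h1 : y ∈ closure (Metric.ball q (δ / 2) ∩ Set.range fun n => (⇑f)^[n] x) :=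
        hx.open_subset_closure_inter Metric.isOpen_ball hy
      have h2 : Metric.ball q (δ / 2) ∩ (Set.range fun n => (⇑f)^[n] x) ⊆ F := by
        rintro _ ⟨hb, n, rfl⟩
        by_cases hn : n ≤ m'
        · exact ⟨n, hn, rfl⟩
        · exact absurd (Metric.mem_ball.mp hb)
            (not_lt.mpr (h n (lt_of_not_ge hn)))
      exact hFfin.isClosed.closure_subset ((closure_mono h2) h1)
    -- then q is an isolated point, hence on the orbit, contradiction
    have hopen : IsOpen (F \ {q})ᶜ := (hFfin.diff : (F \ {q}).Finite).isClosed.isOpen_compl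
    obtain ⟨r₀, hr₀, hr₀sub⟩ := Metric.isOpen_iff.mp hopen q (by simp)
    set r : ℝ := min r₀ (δ / 2) with hr
    have hrpos : 0 < r := lt_min hr₀ (by linarith)
    obtain ⟨y, hy1, n, rfl⟩ := Metric.dense_iff.mp hx q r hrpos
    have hyq : (⇑f)^[n] x = q := by
      have h1 : (⇑f)^[n] x ∈ F := hsub (Metric.ball_subset_ball (min_le_right _ _) hy1)
      have h2 : (⇑f)^[n] x ∉ F \ {q} :=
        hr₀sub (Metric.ball_subset_ball (min_le_left _ _) hy1)
      by_contra hne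
      exact h2 ⟨h1, hne⟩
    have : dist ((⇑f)^[m' + 1 + n] x) q = 0 := by
      rw [Function.iterate_add_apply, hyq, hqn]
      simp
    have := h (m' + 1 + n) (by omega)
    linarith
  obtain ⟨m, hmm', hm⟩ := key
  set N : ℕ := m - m' with hN
  have hN1 : 1 ≤ N := by omega
  have hmN : m' + N = m := by omega
  -- the pseudo-orbit
  set xs : ℤ → X := fun i => if i ≤ 0 then p else
    if i < (N : ℤ) then (⇑f)^[m' + i.toNat] x else q with hxs
  have hstep01 : dist (f p) (f ((⇑f)^[m'] x)) < δ / 2 := by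
    exact hηf ((dist_comm ((⇑f)^[m'] x) p) ▸ hm')
  have hfiter : ∀ k, f ((⇑f)^[k] x) = (⇑f)^[k + 1] x := fun k =>
    (Function.iterate_succ_apply' (⇑f) k x).symm
  have hpseudo : ∀ i : ℤ, dist (f (xs i)) (xs (i + 1)) < δ := by
    intro i
    rcases lt_trichotomy i 0 with hi | hi | hi
    · have e1 : xs i = p := by simp only [hxs]; rw [if_pos hi.le]
      have e2 : xs (i + 1) = p := by
        simp only [hxs]; rw [if_pos (show i + 1 ≤ 0 by omega)]
      rw [e1, e2, hp]
      simpa using hδ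
    · subst hi
      have e1 : xs 0 = p := by simp only [hxs]; rw [if_pos le_rfl]
      rw [e1]
      by_cases h1 : (1 : ℤ) < (N : ℤ)
      · have e2 : xs (0 + 1) = (⇑f)^[m' + 1] x := by
          simp only [hxs, zero_add]
          rw [if_neg (by omega), if_pos h1]
          norm_num
        rw [e2, ← hfiter m', hp]
        calc dist p (f ((⇑f)^[m'] x)) = dist (f p) (f ((⇑f)^[m'] x)) := by rw [hp]
        _ < δ / 2 := hstep01
        _ < δ := by linarith
      · -- N = 1, so m = m' + 1
        have hN1' : N = 1 := by omega
        have e2 : xs (0 + 1) = q := by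
          simp only [hxs, zero_add]
          rw [if_neg (by omega), if_neg (by omega)]
        rw [e2, hp]
        have hm1 : m = m' + 1 := by omega
        calc dist p q ≤ dist p ((⇑f)^[m' + 1] x) + dist ((⇑f)^[m' + 1] x) q :=
              dist_triangle _ _ _
        _ < δ / 2 + δ / 2 := by
            apply add_lt_add
            · rw [← hfiter m', ← hp]; exact hstep01
            · rw [← hm1]; exact hm
        _ = δ := by ring
    · -- 0 < i
      by_cases hiN : i < (N : ℤ)
      · have e1 : xs i = (⇑f)^[m' + i.toNat] x := by
          simp only [hxs]
          rw [if_neg (by omega), if_pos hiN]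
        rw [e1, hfiter (m' + i.toNat)]
        by_cases hiN' : i + 1 < (N : ℤ)
        · have e2 : xs (i + 1) = (⇑f)^[m' + (i + 1).toNat] x := by
            simp only [hxs]
            rw [if_neg (by omega), if_pos hiN']
          rw [e2]
          have h3 : m' + i.toNat + 1 = m' + (i + 1).toNat := by omega
          rw [h3]
          simpa using hδ
        · -- i + 1 = N
          have e2 : xs (i + 1) = q := by
            simp only [hxs]
            rw [if_neg (by omega), if_neg (by omega)]
          rw [e2]
          have h3 : m' + i.toNat + 1 = m := by omega
          rw [h3]
          linarith
      · have e1 : xs i = q := by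
          simp only [hxs]
          rw [if_neg (by omega), if_neg (by omega)]
        have e2 : xs (i + 1) = q := by
          simp only [hxs]
          rw [if_neg (by omega), if_neg (by omega)]
        rw [e1, e2, hq]
        simpa using hδ
  obtain ⟨y, hy⟩ := hshad xs hpseudo
  -- y is ε₀-close to p in the past
  have hyp : ∀ n : ℕ, dist ((f ^ (-(n : ℤ))) y) p ≤ ε₀ := by
    intro n
    have := hy (-(n : ℤ))
    have e : xs (-(n : ℤ)) = p := by simp [hxs]
    rw [e] at this
    exact this.le
  have hU : Tendsto (fun n : ℕ => (f ^ (-(n : ℤ))) y) atTop (𝓝 p) := hloc_u y hyp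
  -- z = f^N y
  refine ⟨(f ^ (N : ℤ)) y, ?_, ?_⟩
  · have comp : Tendsto (fun n : ℕ => (f ^ (-((n - N : ℕ) : ℤ))) y) atTop (𝓝 p) :=
      hU.comp (tendsto_sub_atTop_nat N)
    refine comp.congr' ?_
    filter_upwards [eventually_ge_atTop N] with n hn
    have hcast : -((n - N : ℕ) : ℤ) = -(n : ℤ) + (N : ℤ) := by
      rw [Nat.cast_sub hn]; ring
    rw [hcast, zpow_add, Equiv.Perm.mul_apply]
  · apply hloc_s
    intro n
    have e : (f ^ (n : ℤ)) ((f ^ (N : ℤ)) y) = (f ^ ((n : ℤ) + N)) y := by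
      rw [zpow_add, Equiv.Perm.mul_apply]
    rw [e]
    have := hy ((n : ℤ) + N)
    have exs : xs ((n : ℤ) + N) = q := by
      simp only [hxs]
      rw [if_neg (by omega), if_neg (by omega)]
    rw [exs] at this
    exact this.le
end
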